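/- Define the rational map ι(a,b) = (a', b') by a' = (b−3)(4ab + 6a + 9)/(a b^2 − 4ab + 12a − 18b + 18) and b' = 3b/(b−3). Then: (1) ι is an involution, i.e. applying ι twice returns (a,b) wherever all the denominators involved are nonzero; and (2) the quantity x = b^2/(b−3) is invariant under ι, i.e. (b')^2/(b'−3) = b^2/(b−3) whenever b ≠ 3 and b' ≠ 3. (These may be stated as identities of rational functions in the field Q(a,b), or for all complex a, b at which the denominators do not vanish.) -/
import Mathlib


/-- First component `a' = (b−3)(4ab + 6a + 9)/(ab² − 4ab + 12a − 18b + 18)` of the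
canonical involution `ι` on the Hurwitz variety for
`h = (PSL₃(F₃), (2⁴1⁵, 3³1⁴), (3,2))`. -/
noncomputable def iotaA (a b : ℂ) : ℂ :=
  (b - 3) * (4 * a * b + 6 * a + 9) / (a * b ^ 2 - 4 * a * b + 12 * a - 18 * b + 18)

/-- Second component `b' = 3b/(b−3)` of the canonical involution `ι`. -/
noncomputable def iotaB (b : ℂ) : ℂ := 3 * b / (b - 3)

set_option maxHeartbeats 2000000 in
/-- (1) `ι` is an involution: applying `ι` twice returns `(a,b)` wherever all the
denominators involved are nonzero; and (2) the quantity `x = b²/(b−3)` is invariant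
under `ι`: `(b')²/(b'−3) = b²/(b−3)` whenever `b ≠ 3` and `b' ≠ 3`. -/
theorem statement15 :
    (∀ a b : ℂ,
      b - 3 ≠ 0 →
      a * b ^ 2 - 4 * a * b + 12 * a - 18 * b + 18 ≠ 0 →
      iotaB b - 3 ≠ 0 →
      iotaA a b * (iotaB b) ^ 2 - 4 * iotaA a b * iotaB b + 12 * iotaA a b
        - 18 * iotaB b + 18 ≠ 0 →
      iotaA (iotaA a b) (iotaB b) = a ∧ iotaB (iotaB b) = b) ∧
    (∀ b : ℂ, b ≠ 3 → iotaB b ≠ 3 →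
      (iotaB b) ^ 2 / (iotaB b - 3) = b ^ 2 / (b - 3)) := by
  constructor
  · intro a b hb hd hb' hd'
    have e1 : iotaA a b * (a * b ^ 2 - 4 * a * b + 12 * a - 18 * b + 18)
        = (b - 3) * (4 * a * b + 6 * a + 9) := by
      rw [iotaA, div_mul_cancel₀ _ hd]
    have e2 : iotaB b * (b - 3) = 3 * b := by
      rw [iotaB, div_mul_cancel₀ _ hb]
    have h1 : iotaB b - 3 = 9 / (b - 3) := by
      rw [iotaB]; field_simp; ring
    have h2 : iotaA a b * (iotaB b) ^ 2 - 4 * iotaA a b * iotaB b + 12 * iotaA a b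
        - 18 * iotaB b + 18 = 729 * b ^ 2 /
          ((a * b ^ 2 - 4 * a * b + 12 * a - 18 * b + 18) * (b - 3)) := by
      rw [eq_div_iff (mul_ne_zero hd hb)]
      apply mul_right_cancel₀ hb
      linear_combination ((iotaB b) ^ 2 * (b - 3) ^ 2 - 4 * iotaB b * (b - 3) ^ 2
          + 12 * (b - 3) ^ 2) * e1
        + ((b - 3) * (4 * a * b + 6 * a + 9) * (iotaB b * (b - 3) + 3 * b)
          - 4 * (b - 3) * (4 * a * b + 6 * a + 9) * (b - 3)
          - 18 * (a * b ^ 2 - 4 * a * b + 12 * a - 18 * b + 18) * (b - 3)) * e2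
    have h3 : 4 * iotaA a b * iotaB b + 6 * iotaA a b + 9 =
        81 * a * b ^ 2 / (a * b ^ 2 - 4 * a * b + 12 * a - 18 * b + 18) := by
      rw [eq_div_iff hd]
      apply mul_right_cancel₀ hb
      linear_combination (4 * iotaB b * (b - 3) + 6 * (b - 3)) * e1
        + 4 * (b - 3) * (4 * a * b + 6 * a + 9) * e2
    have hb0 : b ≠ 0 := by
      intro h
      apply hd'
      rw [h2, h]
      simp
    refine ⟨?_, ?_⟩
    · rw [iotaA, h1, h2, h3]
      rw [div_eq_iff (div_ne_zero (by norm_num; exact hb0) (mul_ne_zero hd hb))]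
      field_simp
      ring
    · simp only [iotaB] at hb' ⊢
      rw [div_eq_iff hb']
      field_simp
      ring
  · intro b hb hb'
    have h3 : b - 3 ≠ 0 := sub_ne_zero.mpr hb
    have h3' : iotaB b - 3 ≠ 0 := sub_ne_zero.mpr hb'
    simp only [iotaB] at h3' ⊢
    rw [div_eq_div_iff h3' h3]
    field_simp
    ring
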